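/- arXiv:1611.01944 — 2 statements merged into one kernel-verified Lean document; each statement's English description precedes it below -/
import Mathlib

section
/- Solutions are strictly increasing in the initial value: if w₀† < w₀‡, γ ∈ ℝ, and w†, w‡ are solutions with parameters (w₀†,γ) and (w₀‡,γ) respectively, then w†(x) < w‡(x) for every x ≥ 0. -/
open Set MeasureTheory Filter Topology

/-- `piU U c w = min_{μ ∈ U} (μ·w + c(μ))`, realized as an infimum. -/
noncomputable def piU (U : Set ℝ) (c : ℝ → ℝ) (w : ℝ) : ℝ :=
  sInf ((fun μ => μ * w + c μ) '' U)

/-- `w` is a continuously differentiable solution on `[0,∞)` of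
`(σ²/2)·w′(x) + π(w(x)) + h(x) = γ` with `w(0) = w₀`, with derivative `w'`. -/
def IsSolution (σ : ℝ) (U : Set ℝ) (c h : ℝ → ℝ) (w₀ γ : ℝ) (w w' : ℝ → ℝ) : Prop :=
  w 0 = w₀ ∧ ContinuousOn w' (Set.Ici 0) ∧
  (∀ x ∈ Set.Ici (0:ℝ), HasDerivWithinAt w (w' x) (Set.Ici 0) x) ∧
  (∀ x ∈ Set.Ici (0:ℝ), σ ^ 2 / 2 * w' x + piU U c (w x) + h x = γ)

/-!
Both solutions solve the same ODE `w' = (2/σ²)(γ - h x - π(w))`, whose right-hand side is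
Lipschitz in `w` because `π` is an infimum of affine functions with slopes in the bounded set `U`.
Since `w‡ - w†` is positive at `0`, a point with `w†(x) ≥ w‡(x)` would give, by the intermediate
value theorem, a point where the graphs meet, and uniqueness backward from there would force
`w₀† = w₀‡`.
-/

section piU

variable {U : Set ℝ} {c : ℝ → ℝ}

lemma piU_le_mul_add (hUcpt : IsCompact U) (hc : ContinuousOn c U) {μ : ℝ} (hμ : μ ∈ U)
    (w : ℝ) : piU U c w ≤ μ * w + c μ :=
  csInf_le ((hUcpt.image_of_continuousOn ((continuousOn_id.mul continuousOn_const).add hc))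
    |>.bddBelow) ⟨μ, hμ, rfl⟩

lemma exists_piU_eq (hUne : U.Nonempty) (hUcpt : IsCompact U) (hc : ContinuousOn c U) (w : ℝ) :
    ∃ μ ∈ U, piU U c w = μ * w + c μ := by
  obtain ⟨μ, hμ, hmin⟩ :=
    hUcpt.exists_isMinOn hUne ((continuousOn_id.mul continuousOn_const).add hc)
  refine ⟨μ, hμ, le_antisymm (piU_le_mul_add hUcpt hc hμ w) ?_⟩
  exact le_csInf (hUne.image _) (by rintro _ ⟨ν, hν, rfl⟩; exact hmin hν)

lemma lipschitzWith_piU (hUne : U.Nonempty) (hUcpt : IsCompact U) (hc : ContinuousOn c U)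
    {M : ℝ} (hM : ∀ μ ∈ U, |μ| ≤ M) : LipschitzWith M.toNNReal (piU U c) := by
  refine LipschitzWith.of_le_add_mul' M fun a b => ?_
  obtain ⟨μ, hμ, hb⟩ := exists_piU_eq hUne hUcpt hc b
  have hslope : μ * (a - b) ≤ M * dist a b :=
    calc μ * (a - b) ≤ |μ| * |a - b| := (le_abs_self _).trans (abs_mul _ _).le
      _ ≤ M * dist a b := mul_le_mul_of_nonneg_right (hM μ hμ) (abs_nonneg _)
  linarith [piU_le_mul_add hUcpt hc hμ a]

lemma exists_lipschitzWith_piU (hUne : U.Nonempty) (hUcpt : IsCompact U)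
    (hc : ContinuousOn c U) : ∃ K, LipschitzWith K (piU U c) := by
  obtain ⟨M, hM⟩ := hUcpt.isBounded.exists_norm_le
  exact ⟨_, lipschitzWith_piU hUne hUcpt hc hM⟩

end piU

namespace IsSolution

variable {σ : ℝ} {U : Set ℝ} {c h w w' : ℝ → ℝ} {w₀ γ : ℝ}

lemma hasDerivWithinAt_rhs (hσ : σ ≠ 0) (hw : IsSolution σ U c h w₀ γ w w') {x : ℝ}
    (hx : 0 ≤ x) :
    HasDerivWithinAt w ((σ ^ 2 / 2)⁻¹ * (γ - h x - piU U c (w x))) (Ici 0) x := by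
  convert hw.2.2.1 x hx using 1
  have := hw.2.2.2 x hx
  field_simp
  linarith

lemma continuousOn (hw : IsSolution σ U c h w₀ γ w w') : ContinuousOn w (Ici 0) :=
  fun x hx => (hw.2.2.1 x hx).continuousWithinAt

lemma eqOn_Icc_of_eq (hσ : σ ≠ 0) (hUne : U.Nonempty) (hUcpt : IsCompact U)
    (hc : ContinuousOn c U) {w₀₁ w₀₂ : ℝ} {w₁ w₁' w₂ w₂' : ℝ → ℝ}
    (hw₁ : IsSolution σ U c h w₀₁ γ w₁ w₁') (hw₂ : IsSolution σ U c h w₀₂ γ w₂ w₂') {x : ℝ}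
    (hx : w₁ x = w₂ x) : EqOn w₁ w₂ (Icc 0 x) := by
  obtain ⟨K, hK⟩ := exists_lipschitzWith_piU hUne hUcpt hc
  let v : ℝ → ℝ → ℝ := fun t y => (σ ^ 2 / 2)⁻¹ * (γ - h t - piU U c y)
  have hv (t : ℝ) : LipschitzWith (‖(σ ^ 2 / 2)⁻¹‖₊ * (0 + K)) (v t) :=
    (lipschitzWith_smul _).comp ((LipschitzWith.const (γ - h t)).sub hK)
  have hderiv {w w' : ℝ → ℝ} {w₀ : ℝ} (hw : IsSolution σ U c h w₀ γ w w') :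
      ∀ t ∈ Ioc 0 x, HasDerivWithinAt w (v t (w t)) (Iic t) t := fun t ht =>
    ((hw.hasDerivWithinAt_rhs hσ ht.1.le).hasDerivAt (Ici_mem_nhds ht.1)).hasDerivWithinAt
  exact ODE_solution_unique_of_mem_Icc_left (s := fun _ => univ)
    (fun t _ => (hv t).lipschitzOnWith) (hw₁.continuousOn.mono Icc_subset_Ici_self)
    (hderiv hw₁) (fun _ _ => trivial) (hw₂.continuousOn.mono Icc_subset_Ici_self)
    (hderiv hw₂) (fun _ _ => trivial) hx

end IsSolution

theorem stmt_7_general (σ : ℝ) (hσ : 0 < σ) (U : Set ℝ) (hUne : U.Nonempty) (hUcpt : IsCompact U)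
    (c : ℝ → ℝ) (hc : Continuous c) (h : ℝ → ℝ)
    (w₀₁ w₀₂ γ : ℝ) (hw₀ : w₀₁ < w₀₂) (w₁ w₁' w₂ w₂' : ℝ → ℝ)
    (hw₁ : IsSolution σ U c h w₀₁ γ w₁ w₁')
    (hw₂ : IsSolution σ U c h w₀₂ γ w₂ w₂') :
    ∀ x : ℝ, 0 ≤ x → w₁ x < w₂ x := by
  intro x hx
  by_contra! hle
  have hgap_cont : ContinuousOn (fun t => w₂ t - w₁ t) (Icc 0 x) :=
    (hw₂.continuousOn.sub hw₁.continuousOn).mono Icc_subset_Ici_self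
  have hgap_zero : (0 : ℝ) ∈ Icc (w₂ x - w₁ x) (w₂ 0 - w₁ 0) := by
    constructor <;> linarith [hw₁.1, hw₂.1]
  obtain ⟨y, hy, hmeet⟩ := intermediate_value_Icc' hx hgap_cont hgap_zero
  have h_eq := IsSolution.eqOn_Icc_of_eq hσ.ne' hUne hUcpt hc.continuousOn hw₁ hw₂
    (sub_eq_zero.mp hmeet).symm ⟨le_rfl, hy.1⟩
  linarith [hw₁.1, hw₂.1]

theorem stmt_7 (σ : ℝ) (hσ : 0 < σ) (U : Set ℝ) (hUne : U.Nonempty) (hUcpt : IsCompact U)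
    (c : ℝ → ℝ) (hc : Continuous c) (h : ℝ → ℝ)
    (hhcont : ContinuousOn h (Set.Ici 0)) (hhmono : StrictMonoOn h (Set.Ici 0))
    (hh0 : h 0 = 0) (hhtop : Filter.Tendsto h Filter.atTop Filter.atTop)
    (w₀₁ w₀₂ γ : ℝ) (hw₀ : w₀₁ < w₀₂) (w₁ w₁' w₂ w₂' : ℝ → ℝ)
    (hw₁ : IsSolution σ U c h w₀₁ γ w₁ w₁')
    (hw₂ : IsSolution σ U c h w₀₂ γ w₂ w₂') :
    ∀ x : ℝ, 0 ≤ x → w₁ x < w₂ x :=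
  stmt_7_general σ hσ U hUne hUcpt c hc h w₀₁ w₀₂ γ hw₀ w₁ w₁' w₂ w₂' hw₁ hw₂
end

section
/- If w is a solution with parameters (w₀,γ) and w′(x) ≥ 0 for all x ≥ 0, then w is strictly increasing on [0,∞) and w(x) → ∞ as x → ∞. -/
open Set MeasureTheory Filter Topology

/- Monotonicity comes from `w' ≥ 0`; strictness because on an interval where `w` is constant the
equation forces `h` to be constant too. For the limit, `w' ≥ 0` gives `π(w x) ≤ γ - h x → -∞`, while
`π(v) ≥ m - K|v|` (compactness of `U`) and `w ≥ w 0` then force `w x → ∞`. -/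

theorem MonotoneOn.eq_of_mem_Icc_of_eq {α β : Type*} [Preorder α] [PartialOrder β] {f : α → β}
    {s : Set α} {a b x : α} (hf : MonotoneOn f s) (hs : s.OrdConnected) (ha : a ∈ s) (hb : b ∈ s)
    (hab : f a = f b) (hx : x ∈ Icc a b) : f x = f a :=
  have hxs : x ∈ s := hs.out ha hb hx
  le_antisymm (hab ▸ hf hxs hb hx.2) (hf ha hxs hx.1)

theorem exists_sub_mul_abs_le_piU {U : Set ℝ} (hUne : U.Nonempty) (hUcpt : IsCompact U)
    {c : ℝ → ℝ} (hc : Continuous c) : ∃ m K : ℝ, 0 < K ∧ ∀ v, m - K * |v| ≤ piU U c v := by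
  obtain ⟨K, hK, hKU⟩ := hUcpt.isBounded.exists_pos_norm_le
  obtain ⟨μ₀, -, hμ₀⟩ := hUcpt.exists_isMinOn hUne hc.continuousOn
  refine ⟨c μ₀, K, hK, fun v => le_csInf (hUne.image _) ?_⟩
  rintro _ ⟨μ, hμ, rfl⟩
  have hμv : |μ * v| ≤ K * |v| := by
    rw [abs_mul]
    exact mul_le_mul_of_nonneg_right (hKU μ hμ) (abs_nonneg v)
  have hcμ : c μ₀ ≤ c μ := hμ₀ hμ
  linarith [neg_abs_le (μ * v)]

namespace IsSolution

variable {σ : ℝ} {U : Set ℝ} {c h : ℝ → ℝ} {w₀ γ : ℝ} {w w' : ℝ → ℝ}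

theorem hasDerivAt (hw : IsSolution σ U c h w₀ γ w w') {x : ℝ} (hx : 0 < x) :
    HasDerivAt w (w' x) x :=
  (hw.2.2.1 x hx.le).hasDerivAt (Ici_mem_nhds hx)

theorem monotoneOn (hw : IsSolution σ U c h w₀ γ w w') (hpos : ∀ x : ℝ, 0 ≤ x → 0 ≤ w' x) :
    MonotoneOn w (Ici 0) := by
  refine monotoneOn_of_hasDerivWithinAt_nonneg (f' := w') (convex_Ici 0)
    (fun x hx => (hw.2.2.1 x hx).continuousWithinAt) (fun x hx => ?_) (fun x hx => ?_)
  all_goals rw [interior_Ici] at hx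
  · exact (hw.hasDerivAt hx).hasDerivWithinAt
  · exact hpos x hx.le

theorem strictMonoOn (hw : IsSolution σ U c h w₀ γ w w') (hhmono : StrictMonoOn h (Ici 0))
    (hpos : ∀ x : ℝ, 0 ≤ x → 0 ≤ w' x) : StrictMonoOn w (Ici 0) := by
  intro a ha b hb hab
  refine lt_of_le_of_ne (hw.monotoneOn hpos ha hb hab.le) fun hwab => ?_
  have hconst : ∀ x ∈ Icc a b, w x = w a :=
    fun x => (hw.monotoneOn hpos).eq_of_mem_Icc_of_eq ordConnected_Ici ha hb hwab
  -- On `(a, b)` the derivative vanishes, so the equation pins `h` to one value.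
  have hh : ∀ x ∈ Ioo a b, h x = γ - piU U c (w a) := by
    intro x hx
    have hx0 : 0 < x := lt_of_le_of_lt ha hx.1
    have hwx : (fun _ => w a) =ᶠ[𝓝 x] w :=
      eventually_of_mem (Ioo_mem_nhds hx.1 hx.2) fun y hy =>
        (hconst y (Ioo_subset_Icc_self hy)).symm
    have hw'x : w' x = 0 :=
      (hw.hasDerivAt hx0).unique ((hasDerivAt_const x (w a)).congr_of_eventuallyEq hwx.symm)
    have := hw.2.2.2 x hx0.le
    rw [hw'x, hconst x (Ioo_subset_Icc_self hx)] at this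
    linarith
  obtain ⟨x₁, hax₁, hx₁b⟩ := exists_between hab
  obtain ⟨x₂, hx₁x₂, hx₂b⟩ := exists_between hx₁b
  have hlt := hhmono (ha.trans hax₁.le) (ha.trans (hax₁.trans hx₁x₂).le) hx₁x₂
  rw [hh x₁ ⟨hax₁, hx₁b⟩, hh x₂ ⟨hax₁.trans hx₁x₂, hx₂b⟩] at hlt
  exact lt_irrefl _ hlt

theorem piU_le (hw : IsSolution σ U c h w₀ γ w w') (hpos : ∀ x : ℝ, 0 ≤ x → 0 ≤ w' x) {x : ℝ}
    (hx : 0 ≤ x) : piU U c (w x) ≤ γ - h x := by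
  have := hw.2.2.2 x hx
  nlinarith [hpos x hx, sq_nonneg σ]

theorem tendsto_atTop (hw : IsSolution σ U c h w₀ γ w w') (hUne : U.Nonempty)
    (hUcpt : IsCompact U) (hc : Continuous c) (hhtop : Tendsto h atTop atTop)
    (hpos : ∀ x : ℝ, 0 ≤ x → 0 ≤ w' x) : Tendsto w atTop atTop := by
  obtain ⟨m, K, hK, hpiU⟩ := exists_sub_mul_abs_le_piU hUne hUcpt hc
  refine Tendsto.atTop_of_const_mul₀ hK <| tendsto_atTop_mono' _ ?_
    (tendsto_atTop_add_const_right _ (m - γ - 2 * K * |w 0|) hhtop)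
  filter_upwards [eventually_ge_atTop 0] with x hx
  have hw0x : w 0 ≤ w x := hw.monotoneOn hpos self_mem_Ici hx hx
  -- `w ≥ w 0` turns the two-sided bound `m - K |v|` into a one-sided one.
  have habs : |w x| ≤ w x + 2 * |w 0| := by
    cases abs_cases (w x) <;> cases abs_cases (w 0) <;> linarith
  nlinarith [hpiU (w x), hw.piU_le hpos hx]

end IsSolution

theorem stmt_12_general (σ : ℝ) (U : Set ℝ) (hUne : U.Nonempty) (hUcpt : IsCompact U)
    (c : ℝ → ℝ) (hc : Continuous c) (h : ℝ → ℝ)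
    (hhmono : StrictMonoOn h (Set.Ici 0)) (hhtop : Filter.Tendsto h Filter.atTop Filter.atTop)
    (w₀ γ : ℝ) (w w' : ℝ → ℝ) (hw : IsSolution σ U c h w₀ γ w w')
    (hpos : ∀ x : ℝ, 0 ≤ x → 0 ≤ w' x) :
    StrictMonoOn w (Set.Ici 0) ∧ Filter.Tendsto w Filter.atTop Filter.atTop :=
  ⟨hw.strictMonoOn hhmono hpos, hw.tendsto_atTop hUne hUcpt hc hhtop hpos⟩

theorem stmt_12 (σ : ℝ) (hσ : 0 < σ) (U : Set ℝ) (hUne : U.Nonempty) (hUcpt : IsCompact U)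
    (c : ℝ → ℝ) (hc : Continuous c) (h : ℝ → ℝ)
    (hhcont : ContinuousOn h (Set.Ici 0)) (hhmono : StrictMonoOn h (Set.Ici 0))
    (hh0 : h 0 = 0) (hhtop : Filter.Tendsto h Filter.atTop Filter.atTop)
    (w₀ γ : ℝ) (w w' : ℝ → ℝ) (hw : IsSolution σ U c h w₀ γ w w')
    (hpos : ∀ x : ℝ, 0 ≤ x → 0 ≤ w' x) :
    StrictMonoOn w (Set.Ici 0) ∧ Filter.Tendsto w Filter.atTop Filter.atTop :=
  stmt_12_general σ U hUne hUcpt c hc h hhmono hhtop w₀ γ w w' hw hpos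
end
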